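/- Let d ≥ 1, n ≥ 1, let G be a symmetric positive definite d×d real matrix with G ⪰ I (Loewner order), and let x_1, …, x_n ∈ ℝ^d satisfy ‖x_j‖₂ ≤ 1 for all j. Define W_0 := G and W_j := W_{j−1} + x_j x_j^⊤ for 1 ≤ j ≤ n. Then Σ_{j=1}^n √( x_j^⊤ W_{j−1}^{−1} x_j ) ≤ √( 2 n log( det(W_n) / det(G) ) ). -/

import Mathlib

/-!
Writing `s_j = x_jᵀ W_{j-1}⁻¹ x_j`, the matrix determinant lemma gives
`det W_j = det W_{j-1} · (1 + s_j)`. Since `W_{j-1} ⪰ I` and `‖x_j‖ ≤ 1` we have `s_j ≤ 1`, where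
`s ≤ 2 log (1 + s)`; so `Σ s_j` is bounded by the telescoping sum `2 log (det W_n / det G)`,
and Cauchy–Schwarz turns this into the bound on `Σ √s_j`.
-/

open Matrix

/-- The Euclidean norm of a vector in `ℝ^d`. -/
noncomputable def euclNorm {d : ℕ} (v : Fin d → ℝ) : ℝ :=
  Real.sqrt (v ⬝ᵥ v)

/-- The design (Gram) matrix after `j` rounds with base matrix `G0`:
`G0 + Σ_{i<j} x_i x_iᵀ` (0-indexed, so this is `W_j` with `W_0 = G0`). -/
noncomputable def gram {d : ℕ} (G0 : Matrix (Fin d) (Fin d) ℝ) (x : ℕ → Fin d → ℝ) (j : ℕ) :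
    Matrix (Fin d) (Fin d) ℝ :=
  G0 + ∑ i ∈ Finset.range j, vecMulVec (x i) (x i)

open Finset

lemma Real.le_two_mul_log_one_add {s : ℝ} (hs₀ : 0 ≤ s) (hs₁ : s ≤ 1) :
    s ≤ 2 * Real.log (1 + s) := by
  have hlog := Real.one_sub_inv_le_log_of_pos (x := 1 + s) (by linarith)
  have hinv : 1 - (1 + s)⁻¹ = s / (1 + s) := by field_simp; ring
  rw [hinv, div_le_iff₀ (by linarith)] at hlog
  nlinarith

lemma Real.sum_sqrt_le_sqrt_card_mul_sum {ι : Type*} (s : Finset ι) {f : ι → ℝ}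
    (hf : ∀ i, 0 ≤ f i) : ∑ i ∈ s, √(f i) ≤ √(#s * ∑ i ∈ s, f i) := by
  simpa [Real.sqrt_mul (Nat.cast_nonneg _)] using
    Real.sum_sqrt_mul_sqrt_le s (fun _ => zero_le_one) hf

lemma Matrix.det_add_vecMulVec {ι R : Type*} [Fintype ι] [DecidableEq ι] [CommRing R]
    {A : Matrix ι ι R} (hA : IsUnit A.det) (u v : ι → R) :
    (A + vecMulVec u v).det = A.det * (1 + v ⬝ᵥ A⁻¹ *ᵥ u) := by
  rw [vecMulVec_eq Unit, det_add_replicateCol_mul_replicateRow hA, Matrix.mul_assoc,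
    ← replicateCol_mulVec, ← det_one_add_mul_comm, det_one_add_replicateCol_mul_replicateRow,
    dotProduct_comm]

lemma Matrix.PosSemidef.posDef_of_sub_one {ι : Type*} [DecidableEq ι] {W : Matrix ι ι ℝ}
    (hW : (W - 1).PosSemidef) : W.PosDef := by
  simpa using PosDef.one.add_posSemidef hW

namespace Matrix

variable {ι : Type*} [Fintype ι] [DecidableEq ι] {W : Matrix ι ι ℝ}

lemma PosDef.dotProduct_inv_mulVec_nonneg (hW : W.PosDef) (v : ι → ℝ) :
    0 ≤ v ⬝ᵥ W⁻¹ *ᵥ v := by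
  simpa using hW.inv.posSemidef.dotProduct_mulVec_nonneg v

lemma PosSemidef.dotProduct_inv_mulVec_le (hW : (W - 1).PosSemidef) (v : ι → ℝ) :
    v ⬝ᵥ W⁻¹ *ᵥ v ≤ v ⬝ᵥ v := by
  have hWpd := hW.posDef_of_sub_one
  set y := W⁻¹ *ᵥ v
  have hWy : W *ᵥ y = v := by
    rw [mulVec_mulVec, mul_nonsing_inv _ hWpd.det_pos.ne'.isUnit, one_mulVec]
  have hs₀ : 0 ≤ v ⬝ᵥ y := hWpd.dotProduct_inv_mulVec_nonneg v
  have hyy : y ⬝ᵥ y ≤ v ⬝ᵥ y := by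
    have := hW.dotProduct_mulVec_nonneg y
    rw [star_trivial, sub_mulVec, one_mulVec, dotProduct_sub, hWy, dotProduct_comm y v] at this
    linarith
  -- Cauchy–Schwarz: `(v ⬝ y)² ≤ (v ⬝ v)(y ⬝ y) ≤ (v ⬝ v)(v ⬝ y)`.
  have hcs : (v ⬝ᵥ y) ^ 2 ≤ (v ⬝ᵥ v) * (y ⬝ᵥ y) := by
    simpa [dotProduct, sq] using Finset.sum_mul_sq_le_sq_mul_sq Finset.univ v y
  have hvv : 0 ≤ v ⬝ᵥ v := by simpa using dotProduct_star_self_nonneg v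
  nlinarith

lemma PosSemidef.dotProduct_inv_mulVec_le_two_mul_log_det_add (hW : (W - 1).PosSemidef)
    {v : ι → ℝ} (hv : v ⬝ᵥ v ≤ 1) :
    v ⬝ᵥ W⁻¹ *ᵥ v ≤ 2 * (Real.log (W + vecMulVec v v).det - Real.log W.det) := by
  have hWpd := hW.posDef_of_sub_one
  have hs₀ := hWpd.dotProduct_inv_mulVec_nonneg v
  rw [det_add_vecMulVec hWpd.det_pos.ne'.isUnit,
    Real.log_mul hWpd.det_pos.ne' (by linarith), add_sub_cancel_left]
  exact Real.le_two_mul_log_one_add hs₀ ((hW.dotProduct_inv_mulVec_le v).trans hv)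

end Matrix

section gram

variable {d : ℕ} (G : Matrix (Fin d) (Fin d) ℝ) (x : ℕ → Fin d → ℝ)

lemma gram_zero : gram G x 0 = G := by
  simp [_root_.gram]

lemma gram_succ (j : ℕ) :
    gram G x (j + 1) = gram G x j + vecMulVec (x j) (x j) := by
  simp only [_root_.gram, sum_range_succ, add_assoc]

variable {G}

lemma gram_sub_one_posSemidef (hG : (G - 1).PosSemidef) (j : ℕ) :
    (gram G x j - 1).PosSemidef := by
  rw [_root_.gram, add_sub_right_comm]
  exact hG.add <| posSemidef_sum _ fun i _ => by
    simpa using posSemidef_vecMulVec_self_star (x i)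

lemma sum_dotProduct_inv_gram_mulVec_le (hG : (G - 1).PosSemidef) {n : ℕ}
    (hx : ∀ j < n, x j ⬝ᵥ x j ≤ 1) :
    ∑ j ∈ range n, x j ⬝ᵥ (gram G x j)⁻¹ *ᵥ x j ≤ 2 * Real.log ((gram G x n).det / G.det) := by
  calc ∑ j ∈ range n, x j ⬝ᵥ (gram G x j)⁻¹ *ᵥ x j
      ≤ ∑ j ∈ range n, 2 * (Real.log (gram G x (j + 1)).det - Real.log (gram G x j).det) :=
        sum_le_sum fun j hj => gram_succ G x j ▸
          (gram_sub_one_posSemidef x hG j).dotProduct_inv_mulVec_le_two_mul_log_det_add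
            (hx j (mem_range.mp hj))
    _ = 2 * Real.log ((gram G x n).det / G.det) := by
        rw [← mul_sum, sum_range_sub (fun j => Real.log (gram G x j).det), gram_zero,
          Real.log_div (gram_sub_one_posSemidef x hG n).posDef_of_sub_one.det_pos.ne'
            hG.posDef_of_sub_one.det_pos.ne']

end gram

theorem stmt_6_general {d n : ℕ}
    (G : Matrix (Fin d) (Fin d) ℝ) (hGI : (G - 1).PosSemidef)
    (x : ℕ → Fin d → ℝ) (hx : ∀ j < n, euclNorm (x j) ≤ 1) :
    (∑ j ∈ Finset.range n, Real.sqrt (x j ⬝ᵥ (gram G x j)⁻¹.mulVec (x j))) ≤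
      Real.sqrt (2 * n * Real.log ((gram G x n).det / G.det)) := by
  have hxx : ∀ j < n, x j ⬝ᵥ x j ≤ 1 := fun j hj => Real.sqrt_le_one.mp (hx j hj)
  calc ∑ j ∈ range n, √(x j ⬝ᵥ (gram G x j)⁻¹ *ᵥ x j)
      ≤ √(n * ∑ j ∈ range n, x j ⬝ᵥ (gram G x j)⁻¹ *ᵥ x j) := by
        simpa using Real.sum_sqrt_le_sqrt_card_mul_sum (range n) fun j =>
          (gram_sub_one_posSemidef x hGI j).posDef_of_sub_one.dotProduct_inv_mulVec_nonneg (x j)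
    _ ≤ √(2 * n * Real.log ((gram G x n).det / G.det)) := by
        rw [mul_comm 2, mul_assoc]
        exact Real.sqrt_le_sqrt <| mul_le_mul_of_nonneg_left
          (sum_dotProduct_inv_gram_mulVec_le x hGI hxx) n.cast_nonneg

/-- Pooled elliptical potential with base matrix `G ⪰ I`:
`Σ_{j=1}^n √(x_jᵀ W_{j-1}⁻¹ x_j) ≤ √( 2 n log( det W_n / det G ) )`. -/
theorem stmt_6 {d n : ℕ} (hd : 1 ≤ d) (hn : 1 ≤ n)
    (G : Matrix (Fin d) (Fin d) ℝ) (hG : G.PosDef) (hGI : (G - 1).PosSemidef)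
    (x : ℕ → Fin d → ℝ) (hx : ∀ j < n, euclNorm (x j) ≤ 1) :
    (∑ j ∈ Finset.range n, Real.sqrt (x j ⬝ᵥ (gram G x j)⁻¹.mulVec (x j))) ≤
      Real.sqrt (2 * n * Real.log ((gram G x n).det / G.det)) :=
  stmt_6_general G hGI x hx
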